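/- Let (X, μ) be a measure space, d ≥ 1, and p > 2 a real number; set p' = p/(p−1). There exists a constant C > 0, depending only on p, such that for all measurable vector fields F, G : X → ℝ^d with ∫_X ‖F‖^p dμ < ∞ and ∫_X ‖G‖^p dμ < ∞, the functions x ↦ |F(x)|^{p−2}F(x) and x ↦ |G(x)|^{p−2}G(x) belong to L^{p'}(μ; ℝ^d) and satisfy ( ∫_X ‖ |F|^{p−2}F − |G|^{p−2}G ‖^{p'} dμ )^{1/p'} ≤ C ( ∫_X ‖F − G‖^p dμ )^{1/p} · [ ( ∫_X ‖F‖^p dμ )^{1/p} + ( ∫_X ‖G‖^p dμ )^{1/p} ]^{p−2}. -/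

import Mathlib

open MeasureTheory Real


/-- scalar step: (s^α - t^α) * t ≤ α * (s+t)^α * (s-t) for 0 ≤ t ≤ s. -/
lemma aux_rpow_sub {α : ℝ} (hα : 0 < α) {s t : ℝ} (ht : 0 ≤ t) (hts : t ≤ s) :
    (s ^ α - t ^ α) * t ≤ α * (s + t) ^ α * (s - t) := by
  have hs : 0 ≤ s := ht.trans hts
  rcases eq_or_lt_of_le ht with rfl | ht0
  · simp only [mul_zero]
    have h0 : (0:ℝ) ≤ (s + 0) ^ α := Real.rpow_nonneg (by linarith) _
    have := mul_nonneg (mul_nonneg hα.le h0) (by linarith : (0:ℝ) ≤ s - 0)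
    linarith
  have hs0 : 0 < s := ht0.trans_le hts
  have hst : 0 < s + t := by linarith
  rcases le_or_gt α 1 with h1 | h1
  · -- concave case: s^α ≤ t^α + α * t^(α-1) * (s - t), via Bernoulli
    have hx : -1 ≤ s / t - 1 := by
      have : 0 ≤ s / t := div_nonneg hs ht
      linarith
    have hb := rpow_one_add_le_one_add_mul_self hx hα.le h1
    rw [add_sub_cancel] at hb
    -- (s/t)^α ≤ 1 + α * (s/t - 1)
    have hts' : (s / t) ^ α = s ^ α / t ^ α := Real.div_rpow hs ht α
    rw [hts'] at hb
    have htα : 0 < t ^ α := Real.rpow_pos_of_pos ht0 _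
    have key : s ^ α - t ^ α ≤ α * t ^ α * (s - t) / t := by
      have := (div_le_iff₀ htα).mp hb
      have h2 : s ^ α ≤ t ^ α + α * (s / t - 1) * t ^ α := by linarith
      have h3 : α * (s / t - 1) * t ^ α = α * t ^ α * (s - t) / t := by
        field_simp
      linarith [h3 ▸ h2]
    have key2 : (s ^ α - t ^ α) * t ≤ α * t ^ α * (s - t) := by
      have := mul_le_mul_of_nonneg_right key ht
      rwa [div_mul_cancel₀ _ (ne_of_gt ht0)] at this
    refine key2.trans ?_
    have hmono : t ^ α ≤ (s + t) ^ α := Real.rpow_le_rpow ht (by linarith) hα.le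
    have hδ : 0 ≤ s - t := sub_nonneg.mpr hts
    nlinarith [mul_le_mul_of_nonneg_right hmono (mul_nonneg hα.le hδ)]
  · -- convex case: s^α - t^α ≤ α * s^(α-1) * (s-t)
    have hx : -1 ≤ t / s - 1 := by
      have : 0 ≤ t / s := div_nonneg ht hs
      linarith
    have hb := one_add_mul_self_le_rpow_one_add hx h1.le
    rw [add_sub_cancel] at hb
    have hts' : (t / s) ^ α = t ^ α / s ^ α := Real.div_rpow ht hs α
    rw [hts'] at hb
    have hsα : 0 < s ^ α := Real.rpow_pos_of_pos hs0 _
    -- s^α + α*(t/s-1)*s^α ≤ t^α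
    have h2 : s ^ α + α * (t / s - 1) * s ^ α ≤ t ^ α := by
      have := (le_div_iff₀ hsα).mp hb
      linarith
    have h3 : α * (t / s - 1) * s ^ α = -(α * s ^ α * (s - t) / s) := by
      field_simp; ring
    have key : s ^ α - t ^ α ≤ α * s ^ α * (s - t) / s := by
      rw [h3] at h2; linarith
    have key2 : (s ^ α - t ^ α) * t ≤ α * s ^ α * (s - t) / s * t := by
      apply mul_le_mul_of_nonneg_right key ht
    refine key2.trans ?_
    -- α * s^α * (s-t)/s * t ≤ α * (s+t)^α * (s-t)
    -- since s^α * t / s = s^(α-1) * t ≤ (s+t)^(α-1) * (s+t) = (s+t)^α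
    have h4 : s ^ α / s * t ≤ (s + t) ^ α := by
      have e1 : s ^ α / s = s ^ (α - 1) := by
        rw [Real.rpow_sub hs0, Real.rpow_one]
      have e2 : (s + t) ^ α = (s + t) ^ (α - 1) * (s + t) := by
        rw [← Real.rpow_add_one (ne_of_gt hst), sub_add_cancel]
      rw [e1, e2]
      have h5 : s ^ (α - 1) ≤ (s + t) ^ (α - 1) :=
        Real.rpow_le_rpow hs (by linarith) (by linarith)
      have h6 : 0 ≤ s ^ (α - 1) := Real.rpow_nonneg hs _
      nlinarith
    have hδ : 0 ≤ s - t := sub_nonneg.mpr hts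
    calc α * s ^ α * (s - t) / s * t = α * (s - t) * (s ^ α / s * t) := by ring
      _ ≤ α * (s - t) * (s + t) ^ α := by
          apply mul_le_mul_of_nonneg_left h4 (by positivity)
      _ = α * (s + t) ^ α * (s - t) := by ring



section Vec
variable {E : Type*} [NormedAddCommGroup E] [NormedSpace ℝ E]

lemma keyA1_aux {α : ℝ} (hα : 0 < α) (a b : E) (hab : ‖b‖ ≤ ‖a‖) :
    ‖(‖a‖ ^ α) • a - (‖b‖ ^ α) • b‖ ≤ (1 + α) * (‖a‖ + ‖b‖) ^ α * ‖a - b‖ := by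
  have hdecomp : (‖a‖ ^ α) • a - (‖b‖ ^ α) • b
      = (‖a‖ ^ α) • (a - b) + (‖a‖ ^ α - ‖b‖ ^ α) • b := by
    rw [smul_sub, sub_smul]; abel
  have hαab : ‖b‖ ^ α ≤ ‖a‖ ^ α := Real.rpow_le_rpow (norm_nonneg _) hab hα.le
  have h1 : ‖(‖a‖ ^ α) • (a - b)‖ ≤ (‖a‖ + ‖b‖) ^ α * ‖a - b‖ := by
    rw [norm_smul, Real.norm_of_nonneg (Real.rpow_nonneg (norm_nonneg _) _)]
    exact mul_le_mul_of_nonneg_right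
      (Real.rpow_le_rpow (norm_nonneg _) (by linarith [norm_nonneg b]) hα.le) (norm_nonneg _)
  have h2 : ‖(‖a‖ ^ α - ‖b‖ ^ α) • b‖ ≤ α * (‖a‖ + ‖b‖) ^ α * ‖a - b‖ := by
    rw [norm_smul, Real.norm_of_nonneg (by linarith)]
    calc (‖a‖ ^ α - ‖b‖ ^ α) * ‖b‖ ≤ α * (‖a‖ + ‖b‖) ^ α * (‖a‖ - ‖b‖) :=
          aux_rpow_sub hα (norm_nonneg _) hab
      _ ≤ α * (‖a‖ + ‖b‖) ^ α * ‖a - b‖ := by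
          apply mul_le_mul_of_nonneg_left (norm_sub_norm_le a b)
          positivity
  calc ‖(‖a‖ ^ α) • a - (‖b‖ ^ α) • b‖
      ≤ ‖(‖a‖ ^ α) • (a - b)‖ + ‖(‖a‖ ^ α - ‖b‖ ^ α) • b‖ := by
        rw [hdecomp]; exact norm_add_le _ _
    _ ≤ (1 + α) * (‖a‖ + ‖b‖) ^ α * ‖a - b‖ := by rw [add_mul, one_mul, add_mul]; linarith

lemma keyA1 {α : ℝ} (hα : 0 < α) (a b : E) :
    ‖(‖a‖ ^ α) • a - (‖b‖ ^ α) • b‖ ≤ (1 + α) * (‖a‖ + ‖b‖) ^ α * ‖a - b‖ := by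
  rcases le_total ‖b‖ ‖a‖ with h | h
  · exact keyA1_aux hα a b h
  · have := keyA1_aux hα b a h
    rwa [norm_sub_rev, norm_sub_rev b a, add_comm ‖b‖] at this

/-- norm of the flux map -/
lemma norm_flux {α : ℝ} (hα : 0 < α) (v : E) : ‖(‖v‖ ^ α) • v‖ = ‖v‖ ^ (α + 1) := by
  rw [norm_smul, Real.norm_of_nonneg (Real.rpow_nonneg (norm_nonneg _) _)]
  rcases eq_or_ne v 0 with rfl | hv
  · simp [Real.zero_rpow hα.ne', Real.zero_rpow (by linarith : α + 1 ≠ 0)]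
  · rw [Real.rpow_add_one (norm_ne_zero_iff.mpr hv)]

end Vec

lemma rpow_add_rpow_le' {a b : ℝ} (ha : 0 ≤ a) (hb : 0 ≤ b) {p : ℝ} (hp : 1 ≤ p) :
    a ^ p + b ^ p ≤ (a + b) ^ p := by
  rcases eq_or_lt_of_le (add_nonneg ha hb) with h0 | h0
  · have ha0 : a = 0 := by linarith [ha, hb]
    have hb0 : b = 0 := by linarith
    simp [ha0, hb0, Real.zero_rpow (by linarith : p ≠ 0)]
  have key : ∀ x : ℝ, 0 ≤ x → x ≤ a + b → x ^ p ≤ (a + b) ^ (p - 1) * x := by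
    intro x hx hxab
    rcases eq_or_lt_of_le hx with rfl | hx0
    · simp [Real.zero_rpow (by linarith : p ≠ 0)]
    calc x ^ p = x ^ (p - 1) * x := by
          rw [← Real.rpow_add_one (ne_of_gt hx0)]; ring_nf
      _ ≤ (a + b) ^ (p - 1) * x :=
          mul_le_mul_of_nonneg_right (Real.rpow_le_rpow hx hxab (by linarith)) hx
  calc a ^ p + b ^ p ≤ (a + b) ^ (p - 1) * a + (a + b) ^ (p - 1) * b :=
        add_le_add (key a ha (by linarith)) (key b hb (by linarith))
    _ = (a + b) ^ (p - 1) * (a + b) := by ring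
    _ = (a + b) ^ p := by rw [← Real.rpow_add_one (ne_of_gt h0)]; ring_nf

lemma add_rpow_le_two_rpow {a b p : ℝ} (ha : 0 ≤ a) (hb : 0 ≤ b) (hp : 0 ≤ p) :
    (a + b) ^ p ≤ 2 ^ p * (a ^ p + b ^ p) := by
  have h2 : ∀ x y : ℝ, 0 ≤ x → x ≤ y → (x + y) ^ p ≤ 2 ^ p * (x ^ p + y ^ p) := by
    intro x y hx hxy
    calc (x + y) ^ p ≤ (2 * y) ^ p := Real.rpow_le_rpow (by linarith) (by linarith) hp
      _ = 2 ^ p * y ^ p := Real.mul_rpow (by norm_num) (by linarith)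
      _ ≤ 2 ^ p * (x ^ p + y ^ p) := by
          have := Real.rpow_nonneg hx p
          have h2p : (0:ℝ) ≤ 2 ^ p := Real.rpow_nonneg (by norm_num) p
          nlinarith
  rcases le_total a b with h | h
  · exact h2 a b ha h
  · have := h2 b a hb h
    rw [add_comm b a, add_comm (b ^ p)] at this; exact this

lemma memLp_of_integrable_norm_rpow {X E : Type*} [MeasurableSpace X] {μ : Measure X}
    [NormedAddCommGroup E] {f : X → E} (hf : AEStronglyMeasurable f μ) {r : ℝ} (hr : 0 < r)
    (h : Integrable (fun x => ‖f x‖ ^ r) μ) : MemLp f (ENNReal.ofReal r) μ := by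
  have hq0 : (ENNReal.ofReal r) ≠ 0 := by
    simp [ENNReal.ofReal_eq_zero, not_le, hr]
  have hqt : (ENNReal.ofReal r) ≠ ⊤ := ENNReal.ofReal_ne_top
  have hiff := memLp_norm_rpow_iff (p := ENNReal.ofReal r) hf hq0 hqt
  rw [ENNReal.div_self hq0 hqt] at hiff
  rw [← hiff, memLp_one_iff_integrable]
  simpa [ENNReal.toReal_ofReal hr.le] using h



/-- Integral continuity estimate for the p-Laplacian flux map: pointwise (A1) plus Hölder. -/
theorem stmt_3 {X : Type*} [MeasurableSpace X] (μ : Measure X) (d : ℕ) (hd : 1 ≤ d)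
    (p : ℝ) (hp : 2 < p) :
    ∃ C : ℝ, 0 < C ∧ ∀ F G : X → EuclideanSpace ℝ (Fin d),
      Measurable F → Measurable G →
      Integrable (fun x => ‖F x‖ ^ p) μ → Integrable (fun x => ‖G x‖ ^ p) μ →
      MemLp (fun x => (‖F x‖ ^ (p - 2)) • F x) (ENNReal.ofReal (p / (p - 1))) μ ∧
      MemLp (fun x => (‖G x‖ ^ (p - 2)) • G x) (ENNReal.ofReal (p / (p - 1))) μ ∧
      (∫ x, ‖(‖F x‖ ^ (p - 2)) • F x - (‖G x‖ ^ (p - 2)) • G x‖ ^ (p / (p - 1)) ∂μ)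
          ^ (1 / (p / (p - 1))) ≤
        C * (∫ x, ‖F x - G x‖ ^ p ∂μ) ^ (1 / p) *
          ((∫ x, ‖F x‖ ^ p ∂μ) ^ (1 / p) + (∫ x, ‖G x‖ ^ p ∂μ) ^ (1 / p)) ^ (p - 2) := by
  have hp0 : (0:ℝ) < p := by linarith
  have hp1 : (0:ℝ) < p - 1 := by linarith
  have hp1' : (1:ℝ) < p - 1 := by linarith
  have hp2 : (0:ℝ) < p - 2 := by linarith
  have hp1ne : p - 1 ≠ 0 := ne_of_gt hp1
  have hpne : p ≠ 0 := ne_of_gt hp0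
  have hp'pos : 0 < p / (p - 1) := div_pos hp0 hp1
  refine ⟨(p - 1) * ((2:ℝ) ^ p) ^ ((p - 2) / p),
    mul_pos hp1 (Real.rpow_pos_of_pos (Real.rpow_pos_of_pos two_pos p) _), ?_⟩
  intro F G hFm hGm hFi hGi
  -- measurability facts
  have hmFn : Measurable fun x => ‖F x‖ ^ (p - 2) :=
    (Real.continuous_rpow_const hp2.le).measurable.comp hFm.norm
  have hmGn : Measurable fun x => ‖G x‖ ^ (p - 2) :=
    (Real.continuous_rpow_const hp2.le).measurable.comp hGm.norm
  have hΦF : Measurable fun x => (‖F x‖ ^ (p - 2)) • F x := hmFn.smul hFm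
  have hΦG : Measurable fun x => (‖G x‖ ^ (p - 2)) • G x := hmGn.smul hGm
  -- norm of flux
  have hnF : ∀ x, ‖(‖F x‖ ^ (p - 2)) • F x‖ = ‖F x‖ ^ (p - 1) := by
    intro x
    have := norm_flux hp2 (F x)
    rwa [show p - 2 + 1 = p - 1 by ring] at this
  have hnG : ∀ x, ‖(‖G x‖ ^ (p - 2)) • G x‖ = ‖G x‖ ^ (p - 1) := by
    intro x
    have := norm_flux hp2 (G x)
    rwa [show p - 2 + 1 = p - 1 by ring] at this
  have hexp1 : (p - 1) * (p / (p - 1)) = p := by field_simp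
  -- MemLp of fluxes
  have hmemF : MemLp (fun x => (‖F x‖ ^ (p - 2)) • F x) (ENNReal.ofReal (p / (p - 1))) μ := by
    apply memLp_of_integrable_norm_rpow hΦF.aestronglyMeasurable hp'pos
    have he : (fun x => ‖(‖F x‖ ^ (p - 2)) • F x‖ ^ (p / (p - 1)))
        = fun x => ‖F x‖ ^ p := by
      funext x
      rw [hnF x, ← Real.rpow_mul (norm_nonneg _), hexp1]
    rw [he]; exact hFi
  have hmemG : MemLp (fun x => (‖G x‖ ^ (p - 2)) • G x) (ENNReal.ofReal (p / (p - 1))) μ := by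
    apply memLp_of_integrable_norm_rpow hΦG.aestronglyMeasurable hp'pos
    have he : (fun x => ‖(‖G x‖ ^ (p - 2)) • G x‖ ^ (p / (p - 1)))
        = fun x => ‖G x‖ ^ p := by
      funext x
      rw [hnG x, ← Real.rpow_mul (norm_nonneg _), hexp1]
    rw [he]; exact hGi
  refine ⟨hmemF, hmemG, ?_⟩
  -- integrability of M^p and δ^p
  have hmM : Measurable fun x => (‖F x‖ + ‖G x‖) ^ p :=
    (Real.continuous_rpow_const hp0.le).measurable.comp (hFm.norm.add hGm.norm)
  have hmδ : Measurable fun x => ‖F x - G x‖ ^ p :=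
    (Real.continuous_rpow_const hp0.le).measurable.comp (hFm.sub hGm).norm
  have hM : Integrable (fun x => (‖F x‖ + ‖G x‖) ^ p) μ := by
    apply Integrable.mono' ((hFi.add hGi).const_mul ((2:ℝ) ^ p)) hmM.aestronglyMeasurable
    filter_upwards with x
    rw [Real.norm_of_nonneg (Real.rpow_nonneg (by positivity) _)]
    exact add_rpow_le_two_rpow (norm_nonneg _) (norm_nonneg _) hp0.le
  have hD : Integrable (fun x => ‖F x - G x‖ ^ p) μ := by
    apply Integrable.mono' hM hmδ.aestronglyMeasurable
    filter_upwards with x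
    rw [Real.norm_of_nonneg (Real.rpow_nonneg (norm_nonneg _) _)]
    exact Real.rpow_le_rpow (norm_nonneg _) (norm_sub_le _ _) hp0.le
  have hA0 : 0 ≤ ∫ x, ‖F x‖ ^ p ∂μ := integral_nonneg fun x => Real.rpow_nonneg (norm_nonneg _) _
  have hB0 : 0 ≤ ∫ x, ‖G x‖ ^ p ∂μ := integral_nonneg fun x => Real.rpow_nonneg (norm_nonneg _) _
  have hD0 : 0 ≤ ∫ x, ‖F x - G x‖ ^ p ∂μ :=
    integral_nonneg fun x => Real.rpow_nonneg (norm_nonneg _) _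
  have hK0 : 0 ≤ ∫ x, (‖F x‖ + ‖G x‖) ^ p ∂μ :=
    integral_nonneg fun x => Real.rpow_nonneg (by positivity) _
  have hS0 : 0 ≤ (∫ x, ‖F x‖ ^ p ∂μ) ^ (1 / p) + (∫ x, ‖G x‖ ^ p ∂μ) ^ (1 / p) :=
    add_nonneg (Real.rpow_nonneg hA0 _) (Real.rpow_nonneg hB0 _)
  have hq2pos : (0:ℝ) < (p - 1) / (p - 2) := div_pos hp1 hp2
  -- conjugate exponents
  have hconj : (p - 1).HolderConjugate ((p - 1) / (p - 2)) := by
    refine Real.holderConjugate_iff.mpr ⟨hp1', ?_⟩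
    rw [inv_div]
    field_simp
    ring
  -- MemLp hypotheses for Hölder
  have hexp2 : (p / (p - 1)) * (p - 1) = p := by field_simp
  have hm₁ : MemLp (fun x => ‖F x - G x‖ ^ (p / (p - 1))) (ENNReal.ofReal (p - 1)) μ := by
    have hmeas1 : Measurable fun x => ‖F x - G x‖ ^ (p / (p - 1)) :=
      (Real.continuous_rpow_const hp'pos.le).measurable.comp (hFm.sub hGm).norm
    apply memLp_of_integrable_norm_rpow hmeas1.aestronglyMeasurable hp1
    have he : (fun x => ‖‖F x - G x‖ ^ (p / (p - 1))‖ ^ (p - 1))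
        = fun x => ‖F x - G x‖ ^ p := by
      funext x
      rw [Real.norm_of_nonneg (Real.rpow_nonneg (norm_nonneg _) _),
        ← Real.rpow_mul (norm_nonneg _), hexp2]
    rw [he]; exact hD
  have hexp3 : ((p - 2) * (p / (p - 1))) * ((p - 1) / (p - 2)) = p := by
    field_simp
  have hm₂ : MemLp (fun x => (‖F x‖ + ‖G x‖) ^ ((p - 2) * (p / (p - 1))))
      (ENNReal.ofReal ((p - 1) / (p - 2))) μ := by
    have hmeas2 : Measurable fun x => (‖F x‖ + ‖G x‖) ^ ((p - 2) * (p / (p - 1))) :=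
      (Real.continuous_rpow_const (by positivity)).measurable.comp (hFm.norm.add hGm.norm)
    apply memLp_of_integrable_norm_rpow hmeas2.aestronglyMeasurable hq2pos
    have he : (fun x => ‖(‖F x‖ + ‖G x‖) ^ ((p - 2) * (p / (p - 1)))‖ ^ ((p - 1) / (p - 2)))
        = fun x => (‖F x‖ + ‖G x‖) ^ p := by
      funext x
      rw [Real.norm_of_nonneg (Real.rpow_nonneg (by positivity) _),
        ← Real.rpow_mul (by positivity), hexp3]
    rw [he]; exact hM
  -- Hölder's inequality
  have hH := integral_mul_le_Lp_mul_Lq_of_nonneg hconj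
    (f := fun x => ‖F x - G x‖ ^ (p / (p - 1)))
    (g := fun x => (‖F x‖ + ‖G x‖) ^ ((p - 2) * (p / (p - 1))))
    (Filter.Eventually.of_forall fun x => Real.rpow_nonneg (norm_nonneg _) _)
    (Filter.Eventually.of_forall fun x => Real.rpow_nonneg (by positivity) _) hm₁ hm₂
  have i1 : ∫ x, (‖F x - G x‖ ^ (p / (p - 1))) ^ (p - 1) ∂μ = ∫ x, ‖F x - G x‖ ^ p ∂μ := by
    apply integral_congr_ae
    filter_upwards with x
    rw [← Real.rpow_mul (norm_nonneg _), hexp2]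
  have i2 : ∫ x, ((‖F x‖ + ‖G x‖) ^ ((p - 2) * (p / (p - 1)))) ^ ((p - 1) / (p - 2)) ∂μ
      = ∫ x, (‖F x‖ + ‖G x‖) ^ p ∂μ := by
    apply integral_congr_ae
    filter_upwards with x
    rw [← Real.rpow_mul (by positivity), hexp3]
  rw [i1, i2, one_div_div] at hH
  -- integrability of the product (via Young's inequality)
  have hmprod : Measurable fun x =>
      ‖F x - G x‖ ^ (p / (p - 1)) * (‖F x‖ + ‖G x‖) ^ ((p - 2) * (p / (p - 1))) :=
    ((Real.continuous_rpow_const hp'pos.le).measurable.comp (hFm.sub hGm).norm).mul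
      ((Real.continuous_rpow_const (by positivity)).measurable.comp (hFm.norm.add hGm.norm))
  have hintmul : Integrable (fun x =>
      ‖F x - G x‖ ^ (p / (p - 1)) * (‖F x‖ + ‖G x‖) ^ ((p - 2) * (p / (p - 1)))) μ := by
    apply Integrable.mono' ((hD.div_const (p - 1)).add (hM.div_const ((p - 1) / (p - 2))))
      hmprod.aestronglyMeasurable
    filter_upwards with x
    rw [Real.norm_of_nonneg (mul_nonneg (Real.rpow_nonneg (norm_nonneg _) _)
      (Real.rpow_nonneg (by positivity) _))]
    have hy := Real.young_inequality_of_nonneg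
      (Real.rpow_nonneg (norm_nonneg (F x - G x)) (p / (p - 1)))
      (Real.rpow_nonneg (show (0:ℝ) ≤ ‖F x‖ + ‖G x‖ by positivity) ((p - 2) * (p / (p - 1))))
      hconj
    rwa [← Real.rpow_mul (norm_nonneg _), hexp2, ← Real.rpow_mul (by positivity), hexp3] at hy
  -- pointwise bound from (A1)
  have hptw : ∀ x, ‖(‖F x‖ ^ (p - 2)) • F x - (‖G x‖ ^ (p - 2)) • G x‖ ^ (p / (p - 1))
      ≤ (p - 1) ^ (p / (p - 1)) *
        (‖F x - G x‖ ^ (p / (p - 1)) * (‖F x‖ + ‖G x‖) ^ ((p - 2) * (p / (p - 1)))) := by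
    intro x
    have h1 := keyA1 hp2 (F x) (G x)
    rw [show (1:ℝ) + (p - 2) = p - 1 by ring] at h1
    have h2 : ‖(‖F x‖ ^ (p - 2)) • F x - (‖G x‖ ^ (p - 2)) • G x‖ ^ (p / (p - 1))
        ≤ ((p - 1) * (‖F x‖ + ‖G x‖) ^ (p - 2) * ‖F x - G x‖) ^ (p / (p - 1)) :=
      Real.rpow_le_rpow (norm_nonneg _) h1 hp'pos.le
    refine h2.trans_eq ?_
    rw [Real.mul_rpow (by positivity) (norm_nonneg _),
      Real.mul_rpow hp1.le (Real.rpow_nonneg (by positivity) _),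
      ← Real.rpow_mul (show (0:ℝ) ≤ ‖F x‖ + ‖G x‖ by positivity)]
    ring
  have hI0 : 0 ≤ ∫ x, ‖(‖F x‖ ^ (p - 2)) • F x - (‖G x‖ ^ (p - 2)) • G x‖ ^ (p / (p - 1)) ∂μ :=
    integral_nonneg fun x => Real.rpow_nonneg (norm_nonneg _) _
  have hIle : (∫ x, ‖(‖F x‖ ^ (p - 2)) • F x - (‖G x‖ ^ (p - 2)) • G x‖ ^ (p / (p - 1)) ∂μ)
      ≤ (p - 1) ^ (p / (p - 1)) *
        ∫ x, ‖F x - G x‖ ^ (p / (p - 1)) * (‖F x‖ + ‖G x‖) ^ ((p - 2) * (p / (p - 1))) ∂μ := by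
    rw [← integral_const_mul]
    exact integral_mono_of_nonneg
      (Filter.Eventually.of_forall fun x => Real.rpow_nonneg (norm_nonneg _) _)
      (hintmul.const_mul _) (Filter.Eventually.of_forall hptw)
  -- bound K by 2^p * S^p
  have hKS : ∫ x, (‖F x‖ + ‖G x‖) ^ p ∂μ
      ≤ 2 ^ p * ((∫ x, ‖F x‖ ^ p ∂μ) ^ (1 / p) + (∫ x, ‖G x‖ ^ p ∂μ) ^ (1 / p)) ^ p := by
    have step1 : ∫ x, (‖F x‖ + ‖G x‖) ^ p ∂μ
        ≤ ∫ x, 2 ^ p * (‖F x‖ ^ p + ‖G x‖ ^ p) ∂μ :=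
      integral_mono hM ((hFi.add hGi).const_mul _)
        (fun x => add_rpow_le_two_rpow (norm_nonneg _) (norm_nonneg _) hp0.le)
    have step2 : ∫ x, (2:ℝ) ^ p * (‖F x‖ ^ p + ‖G x‖ ^ p) ∂μ
        = 2 ^ p * ((∫ x, ‖F x‖ ^ p ∂μ) + ∫ x, ‖G x‖ ^ p ∂μ) := by
      rw [integral_const_mul, integral_add hFi hGi]
    have ea : ((∫ x, ‖F x‖ ^ p ∂μ) ^ (1 / p)) ^ p = ∫ x, ‖F x‖ ^ p ∂μ := by
      rw [← Real.rpow_mul hA0, one_div, inv_mul_cancel₀ hpne, Real.rpow_one]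
    have eb : ((∫ x, ‖G x‖ ^ p ∂μ) ^ (1 / p)) ^ p = ∫ x, ‖G x‖ ^ p ∂μ := by
      rw [← Real.rpow_mul hB0, one_div, inv_mul_cancel₀ hpne, Real.rpow_one]
    have step3 : (∫ x, ‖F x‖ ^ p ∂μ) + (∫ x, ‖G x‖ ^ p ∂μ)
        ≤ ((∫ x, ‖F x‖ ^ p ∂μ) ^ (1 / p) + (∫ x, ‖G x‖ ^ p ∂μ) ^ (1 / p)) ^ p := by
      calc (∫ x, ‖F x‖ ^ p ∂μ) + (∫ x, ‖G x‖ ^ p ∂μ)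
          = ((∫ x, ‖F x‖ ^ p ∂μ) ^ (1 / p)) ^ p + ((∫ x, ‖G x‖ ^ p ∂μ) ^ (1 / p)) ^ p := by
            rw [ea, eb]
        _ ≤ _ := rpow_add_rpow_le' (Real.rpow_nonneg hA0 _) (Real.rpow_nonneg hB0 _)
            (by linarith)
    calc ∫ x, (‖F x‖ + ‖G x‖) ^ p ∂μ
        ≤ 2 ^ p * ((∫ x, ‖F x‖ ^ p ∂μ) + ∫ x, ‖G x‖ ^ p ∂μ) := step1.trans_eq step2
      _ ≤ _ := mul_le_mul_of_nonneg_left step3 (Real.rpow_nonneg (by norm_num) _)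
  -- combine everything
  have hchain : (∫ x, ‖(‖F x‖ ^ (p - 2)) • F x - (‖G x‖ ^ (p - 2)) • G x‖ ^ (p / (p - 1)) ∂μ)
      ≤ (p - 1) ^ (p / (p - 1)) * ((∫ x, ‖F x - G x‖ ^ p ∂μ) ^ (1 / (p - 1)) *
        (2 ^ p * ((∫ x, ‖F x‖ ^ p ∂μ) ^ (1 / p) + (∫ x, ‖G x‖ ^ p ∂μ) ^ (1 / p)) ^ p)
          ^ ((p - 2) / (p - 1))) := by
    refine hIle.trans (mul_le_mul_of_nonneg_left ?_ (Real.rpow_nonneg hp1.le _))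
    refine hH.trans ?_
    exact mul_le_mul_of_nonneg_left
      (Real.rpow_le_rpow hK0 hKS (by positivity)) (Real.rpow_nonneg hD0 _)
  rw [one_div_div]
  calc (∫ x, ‖(‖F x‖ ^ (p - 2)) • F x - (‖G x‖ ^ (p - 2)) • G x‖ ^ (p / (p - 1)) ∂μ)
        ^ ((p - 1) / p)
      ≤ ((p - 1) ^ (p / (p - 1)) * ((∫ x, ‖F x - G x‖ ^ p ∂μ) ^ (1 / (p - 1)) *
        (2 ^ p * ((∫ x, ‖F x‖ ^ p ∂μ) ^ (1 / p) + (∫ x, ‖G x‖ ^ p ∂μ) ^ (1 / p)) ^ p)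
          ^ ((p - 2) / (p - 1)))) ^ ((p - 1) / p) :=
        Real.rpow_le_rpow hI0 hchain (by positivity)
    _ = (p - 1) * ((2:ℝ) ^ p) ^ ((p - 2) / p) * (∫ x, ‖F x - G x‖ ^ p ∂μ) ^ (1 / p) *
        ((∫ x, ‖F x‖ ^ p ∂μ) ^ (1 / p) + (∫ x, ‖G x‖ ^ p ∂μ) ^ (1 / p)) ^ (p - 2) := by
        have h2S : (0:ℝ) ≤ 2 ^ p *
            ((∫ x, ‖F x‖ ^ p ∂μ) ^ (1 / p) + (∫ x, ‖G x‖ ^ p ∂μ) ^ (1 / p)) ^ p := by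
          positivity
        rw [Real.mul_rpow (Real.rpow_nonneg hp1.le _)
            (mul_nonneg (Real.rpow_nonneg hD0 _) (Real.rpow_nonneg h2S _)),
          Real.mul_rpow (Real.rpow_nonneg hD0 _) (Real.rpow_nonneg h2S _),
          ← Real.rpow_mul hp1.le, ← Real.rpow_mul hD0, ← Real.rpow_mul h2S,
          show (p / (p - 1)) * ((p - 1) / p) = 1 by field_simp,
          show (1 / (p - 1)) * ((p - 1) / p) = 1 / p by field_simp,
          show ((p - 2) / (p - 1)) * ((p - 1) / p) = (p - 2) / p by field_simp,
          Real.rpow_one,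
          Real.mul_rpow (Real.rpow_nonneg (by norm_num) _) (Real.rpow_nonneg hS0 _),
          ← Real.rpow_mul hS0,
          show p * ((p - 2) / p) = p - 2 by field_simp]
        ring
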